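/- Let W = (Fin 4 → ℂ) × (Fin 4 → ℂ) and let Λ be the exterior algebra of W over ℂ, with canonical inclusion ι : W → Λ. For i : Fin 4 write uᵢ = ι(eᵢ, 0) and vᵢ = ι(0, eᵢ), where eᵢ is the i-th standard basis vector of Fin 4 → ℂ. Then the element u₀ ∧ u₁ ∧ v₂ ∧ v₃ of Λ does not lie in the ℚ-linear span of the set of all elements of the form (Σᵢ aᵢ uᵢ) ∧ (Σᵢ aᵢ vᵢ) ∧ (Σⱼ bⱼ uⱼ) ∧ (Σⱼ bⱼ vⱼ), where a, b range over all real coefficient vectors a, b : Fin 4 → ℝ. -/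

import Mathlib

/-!
Write `c_{p,q}(ω)` for the coefficient of `u_{p₀} u_{p₁} v_{q₀} v_{q₁}` in a 4-form `ω`; it is a
`ℂ`-linear functional, a determinant of coordinates. On a paired form
`(a, 0) ∧ (0, a) ∧ (b, 0) ∧ (0, b)` it equals `-π_p π_q`, where `π` are the Plücker coordinates
of `a ∧ b`, and this is symmetric in `p` and `q`. So `c_{p,q} - c_{q,p}` kills every paired form,
hence their `ℚ`-span (even their `ℂ`-span), while for `p = (0, 1)`, `q = (2, 3)` it takes the
value `1` on `u₀ u₁ v₂ v₃`.
-/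

open ExteriorAlgebra

section DetForm

variable {R M : Type*} [CommRing R] [AddCommGroup M] [Module R M] {k : ℕ}

noncomputable def detForm (g : M →ₗ[R] Fin k → R) : ExteriorAlgebra R M →ₗ[R] R :=
  liftAlternating (Pi.single (M := fun i => M [⋀^Fin i]→ₗ[R] R) k
    (Matrix.detRowAlternating.compLinearMap g))

theorem detForm_ιMulti (g : M →ₗ[R] Fin k → R) (w : Fin k → M) :
    detForm g (ιMulti R k w) = (Matrix.of fun i => g (w i)).det := by
  rw [detForm, liftAlternating_apply_ιMulti, Pi.single_eq_same]
  rfl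

theorem ι_mul_ι_mul_ι_mul_ι (w₀ w₁ w₂ w₃ : M) :
    ι R w₀ * ι R w₁ * ι R w₂ * ι R w₃ = ιMulti R 4 ![w₀, w₁, w₂, w₃] := by
  simp [ιMulti_apply, mul_assoc]

end DetForm

section Paired

variable {R : Type*} [CommRing R] {n : ℕ}

/-- `detForm (minorCoords p q)` is the coefficient of `u_{p 0} u_{p 1} v_{q 0} v_{q 1}`. -/
def minorCoords (p q : Fin 2 → Fin n) : (Fin n → R) × (Fin n → R) →ₗ[R] Fin 4 → R where
  toFun x := ![x.1 (p 0), x.1 (p 1), x.2 (q 0), x.2 (q 1)]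
  map_add' x y := by ext i; fin_cases i <;> simp
  map_smul' c x := by ext i; fin_cases i <;> simp

def plucker (a b : Fin n → R) (p : Fin 2 → Fin n) : R := a (p 0) * b (p 1) - a (p 1) * b (p 0)

theorem det_minorCoords_paired (p q : Fin 2 → Fin n) (a b : Fin n → R) :
    (Matrix.of fun i => minorCoords p q (![(a, 0), (0, a), (b, 0), (0, b)] i)).det =
      -(plucker a b p * plucker a b q) := by
  simp [Matrix.det_succ_row_zero, Fin.sum_univ_succ, minorCoords, plucker, Fin.succAbove]
  ring

noncomputable def pairingFunctional (p q : Fin 2 → Fin n) :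
    ExteriorAlgebra R ((Fin n → R) × (Fin n → R)) →ₗ[R] R :=
  detForm (minorCoords p q) - detForm (minorCoords q p)

theorem pairingFunctional_paired (p q : Fin 2 → Fin n) (a b : Fin n → R) :
    pairingFunctional p q (ι R (a, 0) * ι R (0, a) * ι R (b, 0) * ι R (0, b)) = 0 := by
  rw [pairingFunctional, LinearMap.sub_apply, ι_mul_ι_mul_ι_mul_ι, detForm_ιMulti,
    detForm_ιMulti, det_minorCoords_paired, det_minorCoords_paired, sub_eq_zero, mul_comm]

theorem sum_smul_ι_inl_single (a : Fin n → R) :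
    ∑ i, a i • ι R ((Pi.single i 1, 0) : (Fin n → R) × (Fin n → R)) = ι R (a, 0) := by
  simp_rw [← map_smul, ← map_sum, Prod.smul_mk, smul_zero, ← prod_mk_sum,
    Finset.sum_const_zero, ← pi_eq_sum_univ']

theorem sum_smul_ι_inr_single (a : Fin n → R) :
    ∑ i, a i • ι R ((0, Pi.single i 1) : (Fin n → R) × (Fin n → R)) = ι R (0, a) := by
  simp_rw [← map_smul, ← map_sum, Prod.smul_mk, smul_zero, ← prod_mk_sum,
    Finset.sum_const_zero, ← pi_eq_sum_univ']

theorem pairingFunctional_mixed :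
    pairingFunctional (R := R) ![(0 : Fin 4), 1] ![2, 3]
      (ι R (Pi.single 0 1, 0) * ι R (Pi.single 1 1, 0) * ι R (0, Pi.single 2 1) *
        ι R (0, Pi.single 3 1)) = 1 := by
  rw [pairingFunctional, LinearMap.sub_apply, ι_mul_ι_mul_ι_mul_ι, detForm_ιMulti,
    detForm_ιMulti]
  simp [Matrix.det_succ_row_zero, Fin.sum_univ_succ, minorCoords, Fin.succAbove]

end Paired

open ExteriorAlgebra in
/-- In the exterior algebra `Λ` of `W = (Fin 4 → ℂ) × (Fin 4 → ℂ)` over `ℂ`, with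
`uᵢ = ι (eᵢ, 0)` and `vᵢ = ι (0, eᵢ)`, the element `u₀ ∧ u₁ ∧ v₂ ∧ v₃` does not lie in
the `ℚ`-linear span of the set of all elements
`(Σᵢ aᵢ uᵢ) ∧ (Σᵢ aᵢ vᵢ) ∧ (Σⱼ bⱼ uⱼ) ∧ (Σⱼ bⱼ vⱼ)` with `a, b : Fin 4 → ℝ`. -/
theorem mixed_form_not_in_rat_span_of_paired_forms
    (u v : Fin 4 → ExteriorAlgebra ℂ ((Fin 4 → ℂ) × (Fin 4 → ℂ)))
    (hu : ∀ i, u i = ι ℂ ((Pi.single i 1, 0) : (Fin 4 → ℂ) × (Fin 4 → ℂ)))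
    (hv : ∀ i, v i = ι ℂ ((0, Pi.single i 1) : (Fin 4 → ℂ) × (Fin 4 → ℂ))) :
    u 0 * u 1 * v 2 * v 3 ∉
      Submodule.span ℚ
        {x : ExteriorAlgebra ℂ ((Fin 4 → ℂ) × (Fin 4 → ℂ)) |
          ∃ a b : Fin 4 → ℝ,
            x = (∑ i, (a i : ℂ) • u i) * (∑ i, (a i : ℂ) • v i) *
                  (∑ j, (b j : ℂ) • u j) * (∑ j, (b j : ℂ) • v j)} := by
  intro hmem
  have hker : u 0 * u 1 * v 2 * v 3 ∈
      LinearMap.ker (pairingFunctional (R := ℂ) ![(0 : Fin 4), 1] ![2, 3]) := by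
    refine Submodule.span_le.mpr ?_ (Submodule.span_le_restrictScalars ℚ ℂ _ hmem)
    rintro _ ⟨a, b, rfl⟩
    simp only [hu, hv, sum_smul_ι_inl_single, sum_smul_ι_inr_single, SetLike.mem_coe, LinearMap.mem_ker,
      pairingFunctional_paired]
  rw [LinearMap.mem_ker, hu, hu, hv, hv, pairingFunctional_mixed] at hker
  exact one_ne_zero hker
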